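/- Let (y11, y12) and (y21, y22) be two solutions of the Berger boundary value problem with the same initial value y12(0) = y22(0) and phi0 := exp(y12(0)) ≠ 1. Set z1 = y11 − y21 and z2 = y12 − y22, and assume that neither z1' nor z2' vanishes identically on (0,1). Then for any zero x2 ∈ (0,1] of z1' there exists ε > 0 such that for every x with x2 − ε < x < x2 one has (y12'(x) + y22'(x)) · z1'(x) · z2'(x) > 0. -/

import Mathlib

open Real Set

/-- Equation (E1) of the Berger Einstein ODE system:
`y1'' + (1/6)(y1')² + (1/3)(y2')² − x⁻¹(1+3x²)(1−x²)⁻¹ y1' = 0`. -/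
noncomputable def BergerE1 (y1 y2 : ℝ → ℝ) (x : ℝ) : ℝ :=
  deriv (deriv y1) x + (1/6) * (deriv y1 x)^2 + (1/3) * (deriv y2 x)^2
    - x⁻¹ * (1 + 3*x^2) * (1 - x^2)⁻¹ * deriv y1 x

/-- Equation (E2) of the Berger Einstein ODE system, with `K = exp ∘ y1`, `phi = exp ∘ y2`:
`y1'' + (1/2)(y1')² − x⁻¹(5+7x²)(1−x²)⁻¹ y1'
  + 8(1−x²)⁻²(6 − 8 K^{-1/3} phi^{-1/3} + 2 K^{-1/3} phi^{-4/3}) = 0`. -/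
noncomputable def BergerE2 (y1 y2 : ℝ → ℝ) (x : ℝ) : ℝ :=
  deriv (deriv y1) x + (1/2) * (deriv y1 x)^2
    - x⁻¹ * (5 + 7*x^2) * (1 - x^2)⁻¹ * deriv y1 x
    + 8 * ((1 - x^2)⁻¹)^2 *
      (6 - 8 * Real.exp (y1 x) ^ (-(1:ℝ)/3) * Real.exp (y2 x) ^ (-(1:ℝ)/3)
         + 2 * Real.exp (y1 x) ^ (-(1:ℝ)/3) * Real.exp (y2 x) ^ (-(4:ℝ)/3))

/-- Equation (E3) of the Berger Einstein ODE system, with `K = exp ∘ y1`, `phi = exp ∘ y2`: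
`y2'' + (1/2) y1' y2' − 2x⁻¹(1+2x²)(1−x²)⁻¹ y2'
  + 32(1−x²)⁻² K^{-1/3} phi^{-1/3}(phi⁻¹ − 1) = 0`. -/
noncomputable def BergerE3 (y1 y2 : ℝ → ℝ) (x : ℝ) : ℝ :=
  deriv (deriv y2) x + (1/2) * deriv y1 x * deriv y2 x
    - 2 * x⁻¹ * (1 + 2*x^2) * (1 - x^2)⁻¹ * deriv y2 x
    + 32 * ((1 - x^2)⁻¹)^2 * Real.exp (y1 x) ^ (-(1:ℝ)/3) * Real.exp (y2 x) ^ (-(1:ℝ)/3)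
      * ((Real.exp (y2 x))⁻¹ - 1)

/-- A solution of the Berger boundary value problem: a pair `(y1, y2)` smooth on `[0,1]`
(realized as globally smooth functions), real analytic on `(0,1]`, satisfying (E1)–(E3)
on `(0,1)`, with boundary conditions `K(1) = phi(1) = 1` (where `K = exp ∘ y1`,
`phi = exp ∘ y2`) and `y1'(0) = y2'(0) = y1'(1) = y2'(1) = 0`. -/
structure BergerBVPSolution (y1 y2 : ℝ → ℝ) : Prop where
  smooth1 : ContDiff ℝ (⊤ : ℕ∞) y1
  smooth2 : ContDiff ℝ (⊤ : ℕ∞) y2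
  analytic1 : AnalyticOnNhd ℝ y1 (Ioc 0 1)
  analytic2 : AnalyticOnNhd ℝ y2 (Ioc 0 1)
  eqE1 : ∀ x ∈ Ioo (0:ℝ) 1, BergerE1 y1 y2 x = 0
  eqE2 : ∀ x ∈ Ioo (0:ℝ) 1, BergerE2 y1 y2 x = 0
  eqE3 : ∀ x ∈ Ioo (0:ℝ) 1, BergerE3 y1 y2 x = 0
  bdryK : Real.exp (y1 1) = 1
  bdryPhi : Real.exp (y2 1) = 1
  der1_0 : deriv y1 0 = 0
  der2_0 : deriv y2 0 = 0
  der1_1 : deriv y1 1 = 0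
  der2_1 : deriv y2 1 = 0

open Filter Topology

/-! Subtracting (E1) for the two solutions gives, with `A = z₁'` and `B = z₂'`,
`(y₁₂' + y₂₂') A B = 3 (c A² - A A')`, where `c = x⁻¹(1+3x²)(1-x²)⁻¹ - (y₁₁' + y₂₁')/6` is bounded
below on `(0,1)` near any `x₂ ∈ (0,1]`, the rational term being positive there. As `A` is analytic
and not identically zero, `A = (x - x₂)ⁿ u` with `n ≥ 1` and `u(x₂) ≠ 0`, so
`A A' = (x - x₂)^(2n-1) (n u² + O(x - x₂))` is negative just left of `x₂` and dominates any
multiple of `A² = O((x - x₂)^(2n))`. -/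

theorem AnalyticAt.eventually_mul_deriv_lt_mul_sq {f : ℝ → ℝ} {a : ℝ} (hf : AnalyticAt ℝ f a)
    (ha : f a = 0) (hnz : ¬ ∀ᶠ x in 𝓝 a, f x = 0) (K : ℝ) :
    ∀ᶠ x in 𝓝[<] a, f x * deriv f x < K * f x ^ 2 := by
  obtain ⟨n, u, hu, hua, hfac⟩ := hf.exists_eventuallyEq_pow_smul_nonzero_iff.2 hnz
  simp only [smul_eq_mul] at hfac
  obtain ⟨m, rfl⟩ : ∃ m, n = m + 1 := Nat.exists_eq_succ_of_ne_zero <| by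
    rintro rfl
    exact hua (by simpa [ha] using hfac.self_of_nhds.symm)
  have hderiv : ∀ᶠ x in 𝓝 a,
      deriv f x = (m + 1) * (x - a) ^ m * u x + (x - a) ^ (m + 1) * deriv u x := by
    have hfac' : f =ᶠ[𝓝 a] fun x => (x - a) ^ (m + 1) * u x := hfac
    filter_upwards [hfac'.deriv, hu.eventually_analyticAt] with x hx hux
    rw [hx]
    have hpow : HasDerivAt (fun x : ℝ => (x - a) ^ (m + 1)) ((m + 1) * (x - a) ^ m) x := by
      simpa using ((hasDerivAt_id x).sub_const a).fun_pow (m + 1)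
    exact (hpow.fun_mul hux.differentiableAt.hasDerivAt).deriv
  set g : ℝ → ℝ := fun x => u x * ((m + 1) * u x + (x - a) * (deriv u x - K * u x))
  have hg : ∀ᶠ x in 𝓝 a, 0 < g x := by
    have hcont : ContinuousAt g a := by
      have := hu.continuousAt
      have := hu.deriv.continuousAt
      fun_prop
    refine continuousAt_const.eventually_lt hcont ?_
    have : g a = (m + 1) * u a ^ 2 := by simp only [g]; ring
    rw [this]
    positivity
  have hsplit : ∀ᶠ x in 𝓝 a, K * f x ^ 2 - f x * deriv f x = -((x - a) ^ (2 * m + 1) * g x) := by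
    filter_upwards [hfac, hderiv] with x hfx hdfx
    rw [hfx, hdfx]
    ring
  filter_upwards [nhdsWithin_le_nhds hsplit, nhdsWithin_le_nhds hg, self_mem_nhdsWithin]
    with x hx hgx (hxa : x < a)
  have hodd : (x - a) ^ (2 * m + 1) < 0 := Odd.pow_neg ⟨m, rfl⟩ (sub_neg.2 hxa)
  nlinarith [mul_neg_of_neg_of_pos hodd hgx]

theorem deriv_add_mul_deriv_sub_of_bergerE1 {y11 y12 y21 y22 : ℝ → ℝ} {x : ℝ}
    (h1 : BergerE1 y11 y12 x = 0) (h2 : BergerE1 y21 y22 x = 0) :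
    (deriv y12 x + deriv y22 x) * (deriv y12 x - deriv y22 x) =
      3 * ((x⁻¹ * (1 + 3 * x ^ 2) * (1 - x ^ 2)⁻¹ - (deriv y11 x + deriv y21 x) / 6) *
          (deriv y11 x - deriv y21 x) - (deriv (deriv y11) x - deriv (deriv y21) x)) := by
  unfold BergerE1 at h1 h2
  linear_combination 3 * h1 - 3 * h2

theorem deriv_add_mul_deriv_sub_mul_pos_of_bergerE1 {y11 y12 y21 y22 : ℝ → ℝ} {x M : ℝ}
    (hx : x ∈ Ioo 0 1) (h1 : BergerE1 y11 y12 x = 0) (h2 : BergerE1 y21 y22 x = 0)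
    (hs : deriv y11 x + deriv y21 x ≤ 6 * M)
    (hA : (deriv y11 x - deriv y21 x) * (deriv (deriv y11) x - deriv (deriv y21) x) <
      -M * (deriv y11 x - deriv y21 x) ^ 2) :
    0 < (deriv y12 x + deriv y22 x) * (deriv y11 x - deriv y21 x) *
      (deriv y12 x - deriv y22 x) := by
  have hP : 0 < x⁻¹ * (1 + 3 * x ^ 2) * (1 - x ^ 2)⁻¹ := by
    have : 0 < 1 - x ^ 2 := by nlinarith [hx.1, hx.2]
    have := hx.1
    positivity
  have hc : 0 ≤ x⁻¹ * (1 + 3 * x ^ 2) * (1 - x ^ 2)⁻¹ - (deriv y11 x + deriv y21 x) / 6 + M := by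
    linarith
  have hE := deriv_add_mul_deriv_sub_of_bergerE1 h1 h2
  have hsplit : (deriv y12 x + deriv y22 x) * (deriv y11 x - deriv y21 x) *
      (deriv y12 x - deriv y22 x) =
        3 * ((x⁻¹ * (1 + 3 * x ^ 2) * (1 - x ^ 2)⁻¹ - (deriv y11 x + deriv y21 x) / 6 + M) *
          (deriv y11 x - deriv y21 x) ^ 2 + (-M * (deriv y11 x - deriv y21 x) ^ 2 -
            (deriv y11 x - deriv y21 x) * (deriv (deriv y11) x - deriv (deriv y21) x))) := by
    linear_combination (deriv y11 x - deriv y21 x) * hE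
  rw [hsplit]
  have := mul_nonneg hc (sq_nonneg (deriv y11 x - deriv y21 x))
  linarith

namespace BergerBVPSolution

variable {y1 y2 : ℝ → ℝ}

theorem differentiable_fst (h : BergerBVPSolution y1 y2) : Differentiable ℝ y1 :=
  h.smooth1.differentiable (by simp)

theorem differentiable_snd (h : BergerBVPSolution y1 y2) : Differentiable ℝ y2 :=
  h.smooth2.differentiable (by simp)

theorem differentiable_deriv_fst (h : BergerBVPSolution y1 y2) : Differentiable ℝ (deriv y1) :=
  (contDiff_infty_iff_deriv.mp h.smooth1).2.differentiable (by simp)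

end BergerBVPSolution

theorem berger_sign_before_zero_general (y11 y12 y21 y22 : ℝ → ℝ)
    (hsol1 : BergerBVPSolution y11 y12) (hsol2 : BergerBVPSolution y21 y22)
    (hnz1 : ¬ ∀ x ∈ Ioo (0:ℝ) 1, deriv (fun x => y11 x - y21 x) x = 0)
    (x2 : ℝ) (hx2 : x2 ∈ Ioc (0:ℝ) 1)
    (hz : deriv (fun x => y11 x - y21 x) x2 = 0) :
    ∃ ε > 0, ∀ x, x2 - ε < x → x < x2 →
      0 < (deriv y12 x + deriv y22 x) * deriv (fun x => y11 x - y21 x) x *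
        deriv (fun x => y12 x - y22 x) x := by
  set A : ℝ → ℝ := fun x => deriv y11 x - deriv y21 x
  have hzA : deriv (fun x => y11 x - y21 x) = A :=
    funext fun x => deriv_sub (hsol1.differentiable_fst x) (hsol2.differentiable_fst x)
  have hzB : deriv (fun x => y12 x - y22 x) = fun x => deriv y12 x - deriv y22 x :=
    funext fun x => deriv_sub (hsol1.differentiable_snd x) (hsol2.differentiable_snd x)
  rw [hzA] at hnz1 hz
  rw [hzA, hzB]
  have hA : AnalyticOnNhd ℝ A (Ioc 0 1) := hsol1.analytic1.deriv.sub hsol2.analytic1.deriv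
  have hAnz : ¬ ∀ᶠ x in 𝓝 x2, A x = 0 := fun h => hnz1 fun x hx =>
    hA.eqOn_zero_of_preconnected_of_eventuallyEq_zero isPreconnected_Ioc hx2 h
      (Ioo_subset_Ioc_self hx)
  set M := (deriv y11 x2 + deriv y21 x2 + 1) / 6
  have hAA' := (hA x2 hx2).eventually_mul_deriv_lt_mul_sq hz hAnz (-M)
  have hs : ∀ᶠ x in 𝓝[<] x2, deriv y11 x + deriv y21 x < 6 * M := by
    refine nhdsWithin_le_nhds <| ((hsol1.differentiable_deriv_fst.add
      hsol2.differentiable_deriv_fst).continuous.continuousAt).eventually_lt continuousAt_const ?_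
    simp only [M, Pi.add_apply]
    linarith
  have hIoo : ∀ᶠ x in 𝓝[<] x2, x ∈ Ioo 0 1 :=
    mem_of_superset (Ioo_mem_nhdsLT hx2.1) fun x hx => ⟨hx.1, hx.2.trans_le hx2.2⟩
  have hmain : ∀ᶠ x in 𝓝[<] x2,
      0 < (deriv y12 x + deriv y22 x) * A x * (deriv y12 x - deriv y22 x) := by
    filter_upwards [hAA', hs, hIoo] with x hAx hsx hx
    have hdA : deriv A x = deriv (deriv y11) x - deriv (deriv y21) x :=
      deriv_sub (hsol1.differentiable_deriv_fst x) (hsol2.differentiable_deriv_fst x)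
    rw [hdA] at hAx
    exact deriv_add_mul_deriv_sub_mul_pos_of_bergerE1 hx (hsol1.eqE1 x hx) (hsol2.eqE1 x hx)
      hsx.le hAx
  obtain ⟨l, hl, hsub⟩ := mem_nhdsLT_iff_exists_Ioo_subset.1 hmain
  exact ⟨x2 - l, sub_pos.2 hl, fun x hlx hxx2 => hsub ⟨by linarith, hxx2⟩⟩

/-- just before any zero `x2 ∈ (0,1]` of `z1' = (y11 − y21)'`, one has
`(y12' + y22') z1' z2' > 0`, for two solutions of the Berger BVP with the same
`phi(0) ≠ 1`, provided neither `z1'` nor `z2'` vanishes identically on `(0,1)`. -/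
theorem berger_sign_before_zero (y11 y12 y21 y22 : ℝ → ℝ)
    (hsol1 : BergerBVPSolution y11 y12) (hsol2 : BergerBVPSolution y21 y22)
    (hsame : y12 0 = y22 0)
    (hne : Real.exp (y12 0) ≠ 1)
    (hnz1 : ¬ ∀ x ∈ Ioo (0:ℝ) 1, deriv (fun x => y11 x - y21 x) x = 0)
    (hnz2 : ¬ ∀ x ∈ Ioo (0:ℝ) 1, deriv (fun x => y12 x - y22 x) x = 0)
    (x2 : ℝ) (hx2 : x2 ∈ Ioc (0:ℝ) 1)
    (hz : deriv (fun x => y11 x - y21 x) x2 = 0) :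
    ∃ ε > 0, ∀ x, x2 - ε < x → x < x2 →
      0 < (deriv y12 x + deriv y22 x) * deriv (fun x => y11 x - y21 x) x *
        deriv (fun x => y12 x - y22 x) x :=
  berger_sign_before_zero_general y11 y12 y21 y22 hsol1 hsol2 hnz1 x2 hx2 hz
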